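/- arXiv:2310.12913 — 8 statements merged into one kernel-verified Lean document; each statement's English description precedes it below -/
import Mathlib

section
/- Let U ≥ 1 be a natural number, let T be a finite set of integer triples (a, b, c) such that a + b ≠ c and |a|, |b|, |c| ≤ U for every triple in T, let m ≥ 2 be a real number, and let P be a nonempty finite set of prime numbers each of size at least m. Then there exists a prime p ∈ P such that the number of triples (a, b, c) ∈ T with a + b ≡ c (mod p) is at most |T| · log(3U) / (|P| · log m). -/
/-!
Every false positive `(a, b, c)` has `0 < |a + b - c| ≤ 3U`, and a product of `k` distinct primes,
each at least `m`, that divides such a number forces `m ^ k ≤ 3U`. So each triple is a false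
positive modulo at most `log (3U) / log m` primes of `P`; double counting the pairs (prime, false
positive) then shows that the average prime, hence the best one, has at most
`|T| · log (3U) / (|P| · log m)` false positives.
-/

open Finset

theorem Finset.exists_card_bipartiteAbove_le_mul_div {α β 𝕜 : Type*} [Field 𝕜] [LinearOrder 𝕜]
    [IsStrictOrderedRing 𝕜] {r : α → β → Prop} [∀ a b, Decidable (r a b)]
    {s : Finset α} {t : Finset β} (hs : s.Nonempty) {k : 𝕜}
    (h : ∀ b ∈ t, (#(s.bipartiteBelow r b) : 𝕜) ≤ k) :
    ∃ a ∈ s, (#(t.bipartiteAbove r a) : 𝕜) ≤ #t * k / #s := by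
  have hs_card : (#s : 𝕜) ≠ 0 := by exact_mod_cast hs.card_pos.ne'
  apply exists_le_of_sum_le hs
  calc ∑ a ∈ s, (#(t.bipartiteAbove r a) : 𝕜)
      = ∑ b ∈ t, (#(s.bipartiteBelow r b) : 𝕜) := by
        exact_mod_cast sum_card_bipartiteAbove_eq_sum_card_bipartiteBelow r
    _ ≤ #t * k := by simpa using sum_le_sum h
    _ = ∑ _a ∈ s, #t * k / #s := by
        rw [sum_const, nsmul_eq_mul]; field_simp

theorem pow_card_filter_prime_dvd_le_abs {m : ℝ} (hm : 0 ≤ m) {P : Finset ℕ}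
    (hP : ∀ p ∈ P, p.Prime ∧ m ≤ p) {n : ℤ} (hn : n ≠ 0) :
    m ^ #(P.filter fun p : ℕ => (p : ℤ) ∣ n) ≤ |(n : ℝ)| := by
  set S := P.filter fun p : ℕ => (p : ℤ) ∣ n
  have hS : ∀ p ∈ S, p ∈ P ∧ p ∣ n.natAbs := fun p hp =>
    ⟨(mem_filter.1 hp).1, Int.natCast_dvd.1 (mem_filter.1 hp).2⟩
  have hprod_dvd : ∏ p ∈ S, p ∣ n.natAbs :=
    prod_primes_dvd _ (fun p hp => (hP p (hS p hp).1).1.prime) fun p hp => (hS p hp).2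
  calc m ^ #S = ∏ _p ∈ S, m := (prod_const m).symm
    _ ≤ ∏ p ∈ S, (p : ℝ) := prod_le_prod (fun _ _ => hm) fun p hp => (hP p (hS p hp).1).2
    _ ≤ n.natAbs := by
        rw [← Nat.cast_prod]; exact_mod_cast Nat.le_of_dvd (Int.natAbs_pos.2 hn) hprod_dvd
    _ = |(n : ℝ)| := by rw [Nat.cast_natAbs, Int.cast_abs]

theorem card_filter_prime_dvd_le_log_div_log {m : ℝ} (hm : 1 < m) {P : Finset ℕ}
    (hP : ∀ p ∈ P, p.Prime ∧ m ≤ p) {n : ℤ} (hn : n ≠ 0) :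
    (#(P.filter fun p : ℕ => (p : ℤ) ∣ n) : ℝ) ≤ Real.log |(n : ℝ)| / Real.log m := by
  rw [le_div_iff₀ (Real.log_pos hm), ← Real.log_pow]
  exact Real.log_le_log (by positivity) (pow_card_filter_prime_dvd_le_abs (by linarith) hP hn)

theorem stmt_2_general (U : ℕ)
    (T : Finset (ℤ × ℤ × ℤ))
    (hT : ∀ t ∈ T, t.1 + t.2.1 ≠ t.2.2 ∧ |t.1| ≤ (U : ℤ) ∧ |t.2.1| ≤ (U : ℤ) ∧ |t.2.2| ≤ (U : ℤ))
    (m : ℝ) (hm : 2 ≤ m)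
    (P : Finset ℕ) (hPne : P.Nonempty) (hP : ∀ p ∈ P, Nat.Prime p ∧ m ≤ (p : ℝ)) :
    ∃ p ∈ P,
      ((T.filter (fun t : ℤ × ℤ × ℤ => (p : ℤ) ∣ (t.1 + t.2.1 - t.2.2))).card : ℝ) ≤
        (T.card : ℝ) * Real.log (3 * U) / ((P.card : ℝ) * Real.log m) := by
  have hprimes_per_triple : ∀ t ∈ T, (#(P.bipartiteBelow
      (fun (p : ℕ) (t : ℤ × ℤ × ℤ) => (p : ℤ) ∣ t.1 + t.2.1 - t.2.2) t) : ℝ) ≤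
      Real.log (3 * U) / Real.log m := by
    intro t ht
    obtain ⟨hne, ha, hb, hc⟩ := hT t ht
    have hdiff : t.1 + t.2.1 - t.2.2 ≠ 0 := sub_ne_zero.2 hne
    have hbound : |t.1 + t.2.1 - t.2.2| ≤ 3 * U := by
      have := abs_sub (t.1 + t.2.1) t.2.2
      have := abs_add_le t.1 t.2.1
      omega
    refine (card_filter_prime_dvd_le_log_div_log (by linarith) hP hdiff).trans ?_
    gcongr
    · exact (Real.log_pos (by linarith)).le
    · exact_mod_cast hbound
  obtain ⟨p, hp, hp_le⟩ := exists_card_bipartiteAbove_le_mul_div hPne hprimes_per_triple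
  exact ⟨p, hp, hp_le.trans_eq (by ring)⟩

/-- Let `U ≥ 1`, let `T` be a finite set of integer triples `(a, b, c)` with `a + b ≠ c` and
`|a|, |b|, |c| ≤ U`, let `m ≥ 2` be real and `P` a nonempty finite set of primes each at
least `m`. Then some `p ∈ P` has at most `|T| · log (3U) / (|P| · log m)` pseudo-solutions,
i.e. triples with `a + b ≡ c (mod p)` (meaning `p ∣ a + b - c`). -/
theorem stmt_2 (U : ℕ) (hU : 1 ≤ U)
    (T : Finset (ℤ × ℤ × ℤ))
    (hT : ∀ t ∈ T, t.1 + t.2.1 ≠ t.2.2 ∧ |t.1| ≤ (U : ℤ) ∧ |t.2.1| ≤ (U : ℤ) ∧ |t.2.2| ≤ (U : ℤ))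
    (m : ℝ) (hm : 2 ≤ m)
    (P : Finset ℕ) (hPne : P.Nonempty) (hP : ∀ p ∈ P, Nat.Prime p ∧ m ≤ (p : ℝ)) :
    ∃ p ∈ P,
      ((T.filter (fun t : ℤ × ℤ × ℤ => (p : ℤ) ∣ (t.1 + t.2.1 - t.2.2))).card : ℝ) ≤
        (T.card : ℝ) * Real.log (3 * U) / ((P.card : ℝ) * Real.log m) :=
  stmt_2_general U T hT m hm P hPne hP
end

section
/- Let m ≥ 2 and V ≥ 1 be real numbers, let P be a finite set of prime numbers each of size at least m, let T be a finite set of nonzero integers each of absolute value at most V, and let R be a positive integer with R ≤ |P|. Then there exist R distinct primes p₁, …, p_R ∈ P such that the number of elements t ∈ T divisible by the product p₁⋯p_R is at most |T| · (log V / ((|P| − R + 1) · log m))^R. -/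
/-!
A nonzero integer of absolute value at most `V` has at most `log V / log m` prime divisors
of size at least `m`. Double counting the pairs (prime, element it divides) therefore yields a
prime dividing at most a `log V / (|P| log m)` fraction of the elements. Choosing such a prime,
discarding the elements it does not divide and repeating among the remaining primes `R` times
gives the bound, since a product of distinct primes divides `t` exactly when each factor does.
-/

open Finset

theorem Int.natCast_prod_primes_dvd_iff {Q : Finset ℕ} (hQ : ∀ p ∈ Q, p.Prime) (t : ℤ) :
    ((∏ p ∈ Q, p : ℕ) : ℤ) ∣ t ↔ ∀ p ∈ Q, (p : ℤ) ∣ t := by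
  simp only [Int.natCast_dvd]
  exact ⟨fun h p hp => (dvd_prod_of_mem _ hp).trans h,
    prod_primes_dvd _ (fun p hp => (hQ p hp).prime)⟩

theorem pow_card_filter_dvd_le_abs {m : ℝ} (hm : 0 ≤ m) {P : Finset ℕ}
    (hP : ∀ p ∈ P, p.Prime ∧ m ≤ p) {t : ℤ} (ht : t ≠ 0) :
    m ^ #{p ∈ P | ((p : ℕ) : ℤ) ∣ t} ≤ |(t : ℝ)| := by
  set D := {p ∈ P | ((p : ℕ) : ℤ) ∣ t}
  have hD : ∀ p ∈ D, p ∈ P ∧ (p : ℤ) ∣ t := fun p hp => mem_filter.mp hp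
  have hdvd : ((∏ p ∈ D, p : ℕ) : ℤ) ∣ t :=
    (Int.natCast_prod_primes_dvd_iff (fun p hp => (hP p (hD p hp).1).1) t).mpr
      fun p hp => (hD p hp).2
  calc m ^ #D = ∏ _p ∈ D, m := (prod_const m).symm
    _ ≤ ∏ p ∈ D, (p : ℝ) := prod_le_prod (fun _ _ => hm) fun p hp => (hP p (hD p hp).1).2
    _ = ((∏ p ∈ D, p : ℕ) : ℤ) := by push_cast; rfl
    _ ≤ |(t : ℝ)| := by exact_mod_cast Int.le_of_dvd (abs_pos.mpr ht) ((dvd_abs _ _).mpr hdvd)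

theorem card_filter_dvd_le_log_div_log {m V : ℝ} (hm : 1 < m) {P : Finset ℕ}
    (hP : ∀ p ∈ P, p.Prime ∧ m ≤ p) {t : ℤ} (ht : t ≠ 0) (htV : |(t : ℝ)| ≤ V) :
    (#{p ∈ P | ((p : ℕ) : ℤ) ∣ t} : ℝ) ≤ Real.log V / Real.log m := by
  have hpow := (pow_card_filter_dvd_le_abs (by linarith) hP ht).trans htV
  rw [le_div_iff₀ (Real.log_pos hm), ← Real.log_pow]
  exact Real.log_le_log (by positivity) hpow

section Selection

variable {α β : Type*} (r : α → β → Prop) [∀ a b, Decidable (r a b)]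

theorem exists_mem_card_filter_le_of_forall_card_filter_le {s : Finset α} (hs : s.Nonempty)
    {t : Finset β} {c : ℝ} (h : ∀ b ∈ t, (#{a ∈ s | r a b} : ℝ) ≤ c) :
    ∃ a ∈ s, (#{b ∈ t | r a b} : ℝ) ≤ #t * c / #s := by
  apply exists_le_of_sum_le hs
  have hcount : (∑ a ∈ s, #{b ∈ t | r a b} : ℝ) = ∑ b ∈ t, #{a ∈ s | r a b} := by
    exact_mod_cast sum_card_bipartiteAbove_eq_sum_card_bipartiteBelow r
  rw [hcount, sum_const, nsmul_eq_mul, mul_div_cancel₀ _ (by positivity)]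
  simpa using sum_le_sum h

theorem exists_subset_card_filter_forall_le [DecidableEq α] {c : ℝ} (hc : 0 ≤ c) (R : ℕ) :
    ∀ (P : Finset α) (T : Finset β), (∀ b ∈ T, (#{a ∈ P | r a b} : ℝ) ≤ c) → R ≤ #P →
      ∃ Q ⊆ P, #Q = R ∧
        (#{b ∈ T | ∀ a ∈ Q, r a b} : ℝ) ≤ #T * (c / ((#P - R + 1 : ℕ) : ℝ)) ^ R := by
  induction R with
  | zero => intro P T _ _; exact ⟨∅, empty_subset _, rfl, by simp⟩
  | succ R ih =>
    intro P T hT hRP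
    obtain ⟨p, hpP, hp⟩ := exists_mem_card_filter_le_of_forall_card_filter_le r
      (card_pos.mp (by omega)) hT
    have hcard : #(P.erase p) = #P - 1 := card_erase_of_mem hpP
    obtain ⟨Q, hQP, hQ, hQT⟩ := ih (P.erase p) {b ∈ T | r p b}
      (fun b hb => (hT b (mem_filter.mp hb).1).trans' <| by
        exact_mod_cast card_le_card (filter_subset_filter _ (erase_subset p P)))
      (by omega)
    have hpQ : p ∉ Q := fun h => notMem_erase p P (hQP h)
    set F : ℝ := c / ((#P - (R + 1) + 1 : ℕ) : ℝ)
    have hF : c / ((#(P.erase p) - R + 1 : ℕ) : ℝ) = F := by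
      rw [hcard, show #P - 1 - R + 1 = #P - (R + 1) + 1 by omega]
    have hfirst : (#{b ∈ T | r p b} : ℝ) ≤ #T * F := by
      refine hp.trans ?_
      rw [mul_div_assoc]
      exact mul_le_mul_of_nonneg_left (div_le_div_of_nonneg_left hc (by positivity)
        (by exact_mod_cast (by omega : #P - (R + 1) + 1 ≤ #P))) (by positivity)
    have hsub : {b ∈ T | ∀ a ∈ insert p Q, r a b} ⊆ {b ∈ {b ∈ T | r p b} | ∀ a ∈ Q, r a b} := by
      intro b hb
      simp only [mem_filter, forall_mem_insert] at hb ⊢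
      tauto
    refine ⟨insert p Q, insert_subset hpP (hQP.trans (erase_subset p P)), ?_, ?_⟩
    · rw [card_insert_of_notMem hpQ, hQ]
    · calc (#{b ∈ T | ∀ a ∈ insert p Q, r a b} : ℝ)
          ≤ #{b ∈ {b ∈ T | r p b} | ∀ a ∈ Q, r a b} := by exact_mod_cast card_le_card hsub
        _ ≤ #{b ∈ T | r p b} * F ^ R := hF ▸ hQT
        _ ≤ #T * F * F ^ R := by gcongr
        _ = #T * F ^ (R + 1) := by ring

end Selection

theorem stmt_3_general (m V : ℝ) (hm : 2 ≤ m) (hV : 1 ≤ V)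
    (P : Finset ℕ) (hP : ∀ p ∈ P, Nat.Prime p ∧ m ≤ (p : ℝ))
    (T : Finset ℤ) (hT : ∀ t ∈ T, t ≠ 0 ∧ |(t : ℝ)| ≤ V)
    (R : ℕ) (hRP : R ≤ P.card) :
    ∃ Q ⊆ P, Q.card = R ∧
      ((T.filter (fun t : ℤ => ((∏ p ∈ Q, p : ℕ) : ℤ) ∣ t)).card : ℝ) ≤
        (T.card : ℝ) * (Real.log V / (((P.card - R + 1 : ℕ) : ℝ) * Real.log m)) ^ R := by
  have hlogm : 0 < Real.log m := Real.log_pos (by linarith)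
  obtain ⟨Q, hQP, hQ, hbound⟩ :=
    exists_subset_card_filter_forall_le (fun (p : ℕ) (t : ℤ) => (p : ℤ) ∣ t)
      (div_nonneg (Real.log_nonneg hV) hlogm.le) R P T
      (fun t ht => card_filter_dvd_le_log_div_log (by linarith) hP (hT t ht).1 (hT t ht).2) hRP
  refine ⟨Q, hQP, hQ, ?_⟩
  rw [filter_congr fun t _ => Int.natCast_prod_primes_dvd_iff (fun p hp => (hP p (hQP hp)).1) t,
    div_mul_eq_div_div_swap]
  exact hbound

/-- Iterated prime selection: given primes `P` each at least `m ≥ 2`, nonzero integers `T`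
each of absolute value at most `V ≥ 1`, and `1 ≤ R ≤ |P|`, there are `R` distinct primes in
`P` (a subset `Q ⊆ P` of cardinality `R`) whose product divides at most
`|T| · (log V / ((|P| − R + 1) · log m))^R` elements of `T`. -/
theorem stmt_3 (m V : ℝ) (hm : 2 ≤ m) (hV : 1 ≤ V)
    (P : Finset ℕ) (hP : ∀ p ∈ P, Nat.Prime p ∧ m ≤ (p : ℝ))
    (T : Finset ℤ) (hT : ∀ t ∈ T, t ≠ 0 ∧ |(t : ℝ)| ≤ V)
    (R : ℕ) (hR : 1 ≤ R) (hRP : R ≤ P.card) :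
    ∃ Q ⊆ P, Q.card = R ∧
      ((T.filter (fun t : ℤ => ((∏ p ∈ Q, p : ℕ) : ℤ) ∣ t)).card : ℝ) ≤
        (T.card : ℝ) * (Real.log V / (((P.card - R + 1 : ℕ) : ℝ) * Real.log m)) ^ R :=
  stmt_3_general m V hm hV P hP T hT R hRP
end

section
/- Let m be a positive natural number and let A be a finite set of natural numbers. Define A' = {a mod m : a ∈ A} ∪ {(a mod m) + m : a ∈ A}. Then there exist a, b, c ∈ A with a + b ≡ c (mod m) if and only if there exist x, y, z ∈ A' with x + y = z. -/
/-!
Reducing `a` and `b` modulo `m` turns `a + b ≡ c` into an exact equation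
`a % m + b % m = c % m + k * m`, and since both summands lie below `m` the carry `k` is `0`
or `1`; the two copies `c % m` and `c % m + m` of each residue in `A'` absorb exactly these
two cases. Conversely every element of `A'` is congruent to an element of `A`, so an exact
solution in `A'` reduces to a pseudo-solution in `A`.
-/

theorem Nat.mod_add_mod_eq_or_of_modEq {m a b c : ℕ} (h : a + b ≡ c [MOD m]) :
    a % m + b % m = c % m ∨ a % m + b % m = c % m + m := by
  have carry := Nat.add_mod_add_ite a b m
  rw [h] at carry
  split_ifs at carry
  · exact .inr carry.symm
  · exact .inl (by simpa using carry.symm)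

def reduceMod (m : ℕ) (A : Finset ℕ) : Finset ℕ :=
  A.image (fun a => a % m) ∪ A.image (fun a => a % m + m)

theorem mod_mem_reduceMod {m a : ℕ} {A : Finset ℕ} (ha : a ∈ A) : a % m ∈ reduceMod m A :=
  Finset.mem_union_left _ (Finset.mem_image_of_mem _ ha)

theorem mod_add_mem_reduceMod {m a : ℕ} {A : Finset ℕ} (ha : a ∈ A) :
    a % m + m ∈ reduceMod m A :=
  Finset.mem_union_right _ (Finset.mem_image_of_mem _ ha)

theorem exists_modEq_of_mem_reduceMod {m x : ℕ} {A : Finset ℕ} (hx : x ∈ reduceMod m A) :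
    ∃ a ∈ A, x ≡ a [MOD m] := by
  rcases Finset.mem_union.1 hx with hx | hx <;> obtain ⟨a, ha, rfl⟩ := Finset.mem_image.1 hx
  · exact ⟨a, ha, Nat.mod_modEq a m⟩
  · exact ⟨a, ha, Nat.add_modEq_right.trans (Nat.mod_modEq a m)⟩

theorem stmt_4_general (m : ℕ) (A : Finset ℕ) :
    (∃ a ∈ A, ∃ b ∈ A, ∃ c ∈ A, a + b ≡ c [MOD m]) ↔
      (∃ x ∈ A.image (fun a => a % m) ∪ A.image (fun a => a % m + m),
        ∃ y ∈ A.image (fun a => a % m) ∪ A.image (fun a => a % m + m),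
          ∃ z ∈ A.image (fun a => a % m) ∪ A.image (fun a => a % m + m),
            x + y = z) := by
  change _ ↔ ∃ x ∈ reduceMod m A, ∃ y ∈ reduceMod m A, ∃ z ∈ reduceMod m A, x + y = z
  constructor
  · rintro ⟨a, ha, b, hb, c, hc, habc⟩
    refine ⟨a % m, mod_mem_reduceMod ha, b % m, mod_mem_reduceMod hb, a % m + b % m, ?_, rfl⟩
    rcases Nat.mod_add_mod_eq_or_of_modEq habc with hsum | hsum <;> rw [hsum]
    exacts [mod_mem_reduceMod hc, mod_add_mem_reduceMod hc]
  · rintro ⟨x, hx, y, hy, z, hz, hxyz⟩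
    obtain ⟨a, ha, hxa⟩ := exists_modEq_of_mem_reduceMod hx
    obtain ⟨b, hb, hyb⟩ := exists_modEq_of_mem_reduceMod hy
    obtain ⟨c, hc, hzc⟩ := exists_modEq_of_mem_reduceMod hz
    exact ⟨a, ha, b, hb, c, hc, (hxa.symm.add hyb.symm).trans (hxyz ▸ hzc)⟩

/-- Let `m > 0` and let `A` be a finite set of naturals. With
`A' = {a % m : a ∈ A} ∪ {a % m + m : a ∈ A}`, the set `A` has a pseudo-solution
`a + b ≡ c (mod m)` iff `A'` has an exact 3SUM solution `x + y = z`. -/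
theorem stmt_4 (m : ℕ) (hm : 0 < m) (A : Finset ℕ) :
    (∃ a ∈ A, ∃ b ∈ A, ∃ c ∈ A, a + b ≡ c [MOD m]) ↔
      (∃ x ∈ A.image (fun a => a % m) ∪ A.image (fun a => a % m + m),
        ∃ y ∈ A.image (fun a => a % m) ∪ A.image (fun a => a % m + m),
          ∃ z ∈ A.image (fun a => a % m) ∪ A.image (fun a => a % m + m),
            x + y = z) :=
  stmt_4_general m A
end

section
/- Let U ≥ 1 and g ≥ 1 be natural numbers and let A be a finite set of integers contained in the interval [0, U] with |A| = n. Then A can be partitioned into at most g parts such that every part has cardinality at most 4⌈n/g⌉ and is contained in an interval of length at most 4⌈U/g⌉. -/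
/-!
Give every `a ∈ A` the key `a / 2⌈U/g⌉ + r(a) / 2⌈n/g⌉` (integer division), where `r(a)` is the
number of elements of `A` below `a`, and take the fibers of the key as the parts. Both summands
are monotone in `a`, so each is constant on a fiber: a part lies in one block of `2⌈U/g⌉`
consecutive integers and consists of at most `2⌈n/g⌉` consecutive elements of `A`. Since
`a ≤ U ≤ g⌈U/g⌉` and `r(a) < n ≤ g⌈n/g⌉`, the first summand is at most `g/2` and the second is
below `g/2`, so the key takes at most `g` values.
-/

open Finset

namespace Finset

section Fibers

variable {α ι : Type*} [DecidableEq α] [DecidableEq ι]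

def fibers (A : Finset α) (f : α → ι) : Finset (Finset α) :=
  (A.image f).image fun i => {a ∈ A | f a = i}

variable {A : Finset α} {f : α → ι}

lemma mem_fibers {P : Finset α} : P ∈ A.fibers f ↔ ∃ a ∈ A, {b ∈ A | f b = f a} = P := by
  simp [fibers]

lemma card_fibers_le {T : Finset ι} (hf : ∀ a ∈ A, f a ∈ T) : #(A.fibers f) ≤ #T :=
  card_image_le.trans <| card_le_card fun _ hi => by
    obtain ⟨a, ha, rfl⟩ := mem_image.1 hi
    exact hf a ha

lemma disjoint_of_mem_fibers {P Q : Finset α} (hP : P ∈ A.fibers f) (hQ : Q ∈ A.fibers f)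
    (hPQ : P ≠ Q) : Disjoint P Q := by
  obtain ⟨a, -, rfl⟩ := mem_fibers.1 hP
  obtain ⟨b, -, rfl⟩ := mem_fibers.1 hQ
  refine disjoint_left.2 fun x hx hx' => hPQ ?_
  rw [(mem_filter.1 hx).2.symm.trans (mem_filter.1 hx').2]

lemma biUnion_fibers : (A.fibers f).biUnion id = A := by
  ext a
  simp only [mem_biUnion, id_eq, mem_fibers]
  constructor
  · rintro ⟨_, ⟨b, -, rfl⟩, ha⟩
    exact (mem_filter.1 ha).1
  · exact fun ha => ⟨_, ⟨a, ha, rfl⟩, mem_filter.2 ⟨ha, rfl⟩⟩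

end Fibers

section Rank

variable {α : Type*} [LinearOrder α] (A : Finset α)

def rank (a : α) : ℕ := #{b ∈ A | b < a}

lemma monotone_rank : Monotone A.rank := fun _ _ hab =>
  card_le_card <| monotone_filter_right _ fun _ _ h => h.trans_le hab

lemma strictMonoOn_rank : StrictMonoOn A.rank A := fun a ha _ _ hab =>
  card_lt_card <| (ssubset_iff_of_subset (monotone_filter_right _ fun _ _ h => h.trans hab)).2
    ⟨a, mem_filter.2 ⟨ha, hab⟩, by simp⟩

lemma rank_lt_card {a : α} (ha : a ∈ A) : A.rank a < #A :=
  card_lt_card <| (ssubset_iff_of_subset (filter_subset _ _)).2 ⟨a, ha, by simp⟩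

end Rank

end Finset

lemma Monotone.eq_and_eq_of_add_eq {α β : Type*} [LinearOrder α] [AddCommMonoid β]
    [PartialOrder β] [IsOrderedCancelAddMonoid β] {φ ψ : α → β} (hφ : Monotone φ)
    (hψ : Monotone ψ) {a b : α} (h : φ a + ψ a = φ b + ψ b) : φ a = φ b ∧ ψ a = ψ b := by
  rcases le_total a b with hab | hab
  · exact (add_eq_add_iff_eq_and_eq (hφ hab) (hψ hab)).1 h
  · exact ((add_eq_add_iff_eq_and_eq (hφ hab) (hψ hab)).1 h.symm).imp Eq.symm Eq.symm

lemma Int.ediv_mul_le_and_lt {d : ℤ} (hd : 0 < d) (a : ℤ) : a / d * d ≤ a ∧ a < a / d * d + d :=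
  ⟨Int.ediv_mul_le a hd.ne', by linarith [Int.lt_ediv_add_one_mul_self a hd]⟩

lemma Int.card_le_of_injOn_of_ediv_eq {α : Type*} {P : Finset α} {r : α → ℤ} {s q : ℤ}
    (hs : 0 < s) (hr : Set.InjOn r P) (h : ∀ x ∈ P, r x / s = q) : (#P : ℤ) ≤ s := by
  have hmaps : Set.MapsTo r P (Ico (q * s) (q * s + s)) := fun x hx => by
    rw [coe_Ico, Set.mem_Ico, ← h x hx]
    exact Int.ediv_mul_le_and_lt hs (r x)
  have := card_le_card_of_injOn r hmaps hr
  rw [Int.card_Ico] at this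
  omega

lemma Int.ediv_two_mul_add_ediv_two_mul_lt {x y g c d : ℤ} (hc : 0 < c) (hd : 0 < d)
    (hx : x ≤ g * c) (hy : y < g * d) : x / (2 * c) + y / (2 * d) < g := by
  have hx' : 2 * (x / (2 * c)) ≤ g := by
    refine Int.le_of_mul_le_mul_right ?_ hc
    nlinarith [Int.ediv_mul_le x (show 2 * c ≠ 0 by omega)]
  have hy' : 2 * (y / (2 * d)) < g := by
    refine lt_of_mul_lt_mul_right ?_ hd.le
    nlinarith [Int.ediv_mul_le y (show 2 * d ≠ 0 by omega)]
  omega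

lemma Nat.cast_le_mul_ceil_div (m g : ℕ) (hg : 0 < g) : (m : ℤ) ≤ g * ⌈(m : ℝ) / g⌉ := by
  have : (m : ℝ) ≤ g * ⌈(m : ℝ) / g⌉ := by
    rw [← div_le_iff₀' (by positivity)]
    exact Int.le_ceil _
  exact_mod_cast this

/-- Let `U, g ≥ 1` and let `A ⊆ [0, U]` be a finite set of integers with `|A| = n`. Then `A`
can be partitioned into at most `g` parts, each of cardinality at most `4⌈n/g⌉` and contained
in an interval of length at most `4⌈U/g⌉`. -/
theorem stmt_5 (U g : ℕ) (hU : 1 ≤ U) (hg : 1 ≤ g)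
    (A : Finset ℤ) (hA : ∀ a ∈ A, 0 ≤ a ∧ a ≤ (U : ℤ)) (n : ℕ) (hn : A.card = n) :
    ∃ parts : Finset (Finset ℤ),
      parts.card ≤ g ∧
      (∀ P ∈ parts, ∀ Q ∈ parts, P ≠ Q → Disjoint P Q) ∧
      parts.biUnion id = A ∧
      ∀ P ∈ parts,
        ((P.card : ℤ) ≤ 4 * ⌈(n : ℝ) / (g : ℝ)⌉ ∧
          ∃ lo hi : ℤ, hi - lo ≤ 4 * ⌈(U : ℝ) / (g : ℝ)⌉ ∧ ∀ a ∈ P, lo ≤ a ∧ a ≤ hi) := by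
  obtain rfl | hA0 := A.eq_empty_or_nonempty
  · exact ⟨∅, by simp, by simp, by simp, by simp⟩
  set cU := ⌈(U : ℝ) / g⌉
  set cn := ⌈(n : ℝ) / g⌉
  have hUc : (U : ℤ) ≤ g * cU := Nat.cast_le_mul_ceil_div U g hg
  have hnc : (n : ℤ) ≤ g * cn := Nat.cast_le_mul_ceil_div n g hg
  have hcU : 0 < cU := Int.ceil_pos.2 (by positivity)
  have hcn : 0 < cn := Int.ceil_pos.2 (by rw [← hn]; positivity)
  have hval : Monotone fun a : ℤ => a / (2 * cU) := fun _ _ h => Int.ediv_le_ediv (by omega) h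
  have hrk : Monotone fun a : ℤ => (A.rank a : ℤ) / (2 * cn) := fun _ _ h =>
    Int.ediv_le_ediv (by omega) (by exact_mod_cast A.monotone_rank h)
  set key : ℤ → ℤ := fun a => a / (2 * cU) + (A.rank a : ℤ) / (2 * cn)
  refine ⟨A.fibers key, ?_, fun P hP Q hQ => disjoint_of_mem_fibers hP hQ, biUnion_fibers, ?_⟩
  · suffices #_ ≤ #(Ico (0 : ℤ) g) by simpa using this
    refine card_fibers_le fun a ha => mem_Ico.2 ⟨?_, ?_⟩
    · have := (hA a ha).1
      positivity
    · have := A.rank_lt_card ha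
      exact Int.ediv_two_mul_add_ediv_two_mul_lt hcU hcn (by linarith [(hA a ha).2]) (by omega)
  · rintro P hP
    obtain ⟨a, ha, rfl⟩ := mem_fibers.1 hP
    have hfiber : ∀ b ∈ {b ∈ A | key b = key a},
        b / (2 * cU) = a / (2 * cU) ∧ (A.rank b : ℤ) / (2 * cn) = (A.rank a : ℤ) / (2 * cn) :=
      fun b hb => hval.eq_and_eq_of_add_eq hrk (mem_filter.1 hb).2
    refine ⟨?_, a / (2 * cU) * (2 * cU), a / (2 * cU) * (2 * cU) + 2 * cU - 1, by omega, ?_⟩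
    · have := Int.card_le_of_injOn_of_ediv_eq (by omega)
        (Nat.cast_injective.comp_injOn (A.strictMonoOn_rank.injOn.mono (filter_subset _ A)))
        fun b hb => (hfiber b hb).2
      omega
    · intro b hb
      have := Int.ediv_mul_le_and_lt (show 0 < 2 * cU by omega) b
      rw [(hfiber b hb).1] at this
      omega
end

section
/- Let g ≥ 1 be a natural number and let l, u : {1, …, g} → ℤ satisfy l(i) ≤ u(i) for all i and u(i) < l(j) whenever i < j. Then the number of triples (i, j, k) ∈ {1, …, g}³ with l(i) + l(j) ≤ u(k) and l(k) ≤ u(i) + u(j) is at most (2g + 1)². -/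
/-!
Cover the triples by the chains `{(i, i + a, b - i)}`, i.e. the fibres of
`(i, j, k) ↦ (i + k, j - i)`, which takes at most `(2g + 1)²` values. Along a chain `i` and `j`
increase while `k` decreases, so for two nontrivial triples `(i, j, k)` and `(i', j', k')` with
`i < i'` the ordering of the groups gives
`l k ≤ u i + u j < l i' + l j' ≤ u k' < l k`; hence each chain holds at most one of them.
-/

namespace ThreeSum

open Finset

def IsNontrivial {α : Type*} [Add α] [LE α] (l u : ℕ → α) (t : ℕ × ℕ × ℕ) : Prop :=
  l t.1 + l t.2.1 ≤ u t.2.2 ∧ l t.2.2 ≤ u t.1 + u t.2.1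

/-- The chain `{(i, i + a, b - i)}` through `t` is indexed by `(b, a)`. -/
def chainIndex (t : ℕ × ℕ × ℕ) : ℤ × ℤ :=
  ((t.1 : ℤ) + t.2.2, (t.2.1 : ℤ) - t.1)

section Separated

variable {α : Type*} [AddCommMonoid α] [PartialOrder α] [IsOrderedCancelAddMonoid α]
  {l u : ℕ → α} {s : Finset ℕ}

theorem not_isNontrivial_of_lt
    (hord : ∀ i ∈ s, ∀ j ∈ s, i < j → u i < l j)
    {t t' : ℕ × ℕ × ℕ} (ht : t ∈ s ×ˢ s ×ˢ s) (ht' : t' ∈ s ×ˢ s ×ˢ s)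
    (h₁ : t.1 < t'.1) (h₂ : t.2.1 < t'.2.1) (h₃ : t'.2.2 < t.2.2)
    (hnt : IsNontrivial l u t) : ¬IsNontrivial l u t' := by
  simp only [mem_product] at ht ht'
  rintro ⟨hlow', -⟩
  have hgroups : u t.1 + u t.2.1 < l t'.1 + l t'.2.1 :=
    add_lt_add (hord _ ht.1 _ ht'.1 h₁) (hord _ ht.2.1 _ ht'.2.1 h₂)
  exact (hnt.2.trans_lt (hgroups.trans_le hlow')).not_ge
    (hord _ ht'.2.2 _ ht.2.2 h₃).le

theorem injOn_chainIndex (hord : ∀ i ∈ s, ∀ j ∈ s, i < j → u i < l j) :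
    Set.InjOn chainIndex {t | t ∈ s ×ˢ s ×ˢ s ∧ IsNontrivial l u t} := by
  intro t ht t' ht' heq
  simp only [chainIndex, Prod.ext_iff] at heq
  rcases lt_trichotomy t.1 t'.1 with h | h | h
  · exact (not_isNontrivial_of_lt hord ht.1 ht'.1 h (by omega) (by omega) ht.2 ht'.2).elim
  · exact Prod.ext h (Prod.ext (by omega) (by omega))
  · exact (not_isNontrivial_of_lt hord ht'.1 ht.1 h (by omega) (by omega) ht'.2 ht.2).elim

end Separated

theorem mapsTo_chainIndex (g : ℕ) :
    Set.MapsTo chainIndex (Icc 1 g ×ˢ Icc 1 g ×ˢ Icc 1 g : Finset (ℕ × ℕ × ℕ))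
      (Icc (0 : ℤ) (2 * g) ×ˢ Icc (-(g : ℤ)) g : Finset (ℤ × ℤ)) := by
  intro t ht
  simp only [coe_product, Set.mem_prod, coe_Icc, Set.mem_Icc] at ht ⊢
  simp only [chainIndex]
  omega

theorem card_chainIndex_box (g : ℕ) :
    #(Icc (0 : ℤ) (2 * g) ×ˢ Icc (-(g : ℤ)) g) = (2 * g + 1) ^ 2 := by
  rw [card_product, Int.card_Icc, Int.card_Icc, sq]
  congr 1; omega

end ThreeSum

open ThreeSum in
theorem stmt_7_general (g : ℕ) (l u : ℕ → ℤ)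
    (hord : ∀ i ∈ Finset.Icc 1 g, ∀ j ∈ Finset.Icc 1 g, i < j → u i < l j) :
    ((Finset.Icc 1 g ×ˢ Finset.Icc 1 g ×ˢ Finset.Icc 1 g).filter
      (fun t : ℕ × ℕ × ℕ => l t.1 + l t.2.1 ≤ u t.2.2 ∧ l t.2.2 ≤ u t.1 + u t.2.1)).card ≤
      (2 * g + 1) ^ 2 :=
  (card_chainIndex_box g).symm ▸ Finset.card_le_card_of_injOn chainIndex
    (fun _ ht => mapsTo_chainIndex g (Finset.mem_filter.mp ht).1)
    ((injOn_chainIndex hord).mono fun _ ht => Finset.mem_filter.mp ht)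

/-- Let `g ≥ 1` and let `l, u : {1, …, g} → ℤ` be lower/upper endpoints of `g` disjoint
intervals in increasing order (`l i ≤ u i`, and `u i < l j` for `i < j`). Then the number of
nontrivial triples `(i, j, k)`, i.e. those with `l i + l j ≤ u k` and `l k ≤ u i + u j`,
is at most `(2g + 1)²`. -/
theorem stmt_7 (g : ℕ) (hg : 1 ≤ g) (l u : ℕ → ℤ)
    (hlu : ∀ i ∈ Finset.Icc 1 g, l i ≤ u i)
    (hord : ∀ i ∈ Finset.Icc 1 g, ∀ j ∈ Finset.Icc 1 g, i < j → u i < l j) :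
    ((Finset.Icc 1 g ×ˢ Finset.Icc 1 g ×ˢ Finset.Icc 1 g).filter
      (fun t : ℕ × ℕ × ℕ => l t.1 + l t.2.1 ≤ u t.2.2 ∧ l t.2.2 ≤ u t.1 + u t.2.1)).card ≤
      (2 * g + 1) ^ 2 :=
  stmt_7_general g l u hord
end

section
/- Let U ≥ 1 and g ≥ 1 be natural numbers and let A be a finite set of integers contained in [0, U] with |A| = n. Then there exist a partition of A into parts A₁, …, A_g (some possibly empty) and a set of triples R ⊆ {1, …, g}³ with |R| ≤ (2g + 1)² such that: every part A_i has cardinality at most 4⌈n/g⌉ and is contained in an interval of length at most 4⌈U/g⌉; and for all a, b, c ∈ A with a + b = c there is some (i, j, k) ∈ R with a ∈ A_i, b ∈ A_j, and c ∈ A_k. -/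
/-!
Put `Λ = ⌈U/g⌉` and `M = ⌈n/g⌉`. Cut `[0, U]` into `g` value blocks of width `Λ + 1` and the
sorted set `A` into `g` rank blocks of `M` consecutive elements. The sum of the two block indices
of `x` is monotone in `x` and takes at most `2g - 1` values; grouping these values in pairs gives
`g` parts, and inside one part each block index moves by at most one, so a part has at most `2M`
elements and diameter at most `2Λ + 1`.

For any partition of `A` by a monotone index `f`, a triple `(i, j, k)` hit by a solution
`a + b = c` is determined by `(i, j)` if `k` is the lowest part reached by a sum from parts
`i` and `j`, and otherwise by `(i - j, k)`: along a diagonal `i - j = d` the sums from parts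
`i` and `j` increase with `i`, so only one pair on it can reach both part `k` and a part below.
-/

open Finset

section SumTriples

variable {α : Type*} [AddCommMonoid α] [LinearOrder α] {A : Finset α} {f : α → ℕ}

def sumTriples (A : Finset α) (f : α → ℕ) : Finset (ℕ × ℕ × ℕ) :=
  {p ∈ A ×ˢ A | p.1 + p.2 ∈ A}.image fun p => (f p.1, f p.2, f (p.1 + p.2))

theorem mem_sumTriples {t : ℕ × ℕ × ℕ} :
    t ∈ sumTriples A f ↔ ∃ a ∈ A, ∃ b ∈ A, a + b ∈ A ∧ (f a, f b, f (a + b)) = t := by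
  simp [sumTriples, and_assoc]

theorem sumTriples_subset {I : Finset ℕ} (hf : ∀ a ∈ A, f a ∈ I) :
    sumTriples A f ⊆ I ×ˢ I ×ˢ I := by
  intro t ht
  obtain ⟨a, ha, b, hb, hab, rfl⟩ := mem_sumTriples.1 ht
  simp [hf a ha, hf b hb, hf _ hab]

def HitsBelow (A : Finset α) (f : α → ℕ) (t : ℕ × ℕ × ℕ) : Prop :=
  ∃ a ∈ A, ∃ b ∈ A, a + b ∈ A ∧ f a = t.1 ∧ f b = t.2.1 ∧ f (a + b) < t.2.2

theorem le_of_not_hitsBelow {t t' : ℕ × ℕ × ℕ} (ht : t ∈ sumTriples A f)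
    (ht' : ¬HitsBelow A f t') (h1 : t.1 = t'.1) (h2 : t.2.1 = t'.2.1) : t'.2.2 ≤ t.2.2 := by
  obtain ⟨a, ha, b, hb, hab, rfl⟩ := mem_sumTriples.1 ht
  by_contra! hlt
  exact ht' ⟨a, ha, b, hb, hab, h1, h2, hlt⟩

theorem not_lt_of_hitsBelow [IsOrderedCancelAddMonoid α] (hf : MonotoneOn f A)
    {t t' : ℕ × ℕ × ℕ} (ht : t ∈ sumTriples A f) (ht' : HitsBelow A f t')
    (h3 : t.2.2 = t'.2.2) (h1 : t.1 < t'.1) : ¬t.2.1 < t'.2.1 := by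
  obtain ⟨a, ha, b, hb, hab, rfl⟩ := mem_sumTriples.1 ht
  obtain ⟨a', ha', b', hb', hab', ha't, hb't, hlt⟩ := ht'
  intro h2
  have hsum : a + b < a' + b' :=
    add_lt_add (hf.reflect_lt ha ha' (ha't ▸ h1)) (hf.reflect_lt hb hb' (hb't ▸ h2))
  exact (hf hab hab' hsum.le).not_gt (hlt.trans_eq h3.symm)

theorem card_sumTriples_le [IsOrderedCancelAddMonoid α] {g : ℕ} (hf : MonotoneOn f A)
    (hfg : ∀ a ∈ A, f a ∈ Icc 1 g) : #(sumTriples A f) ≤ (2 * g + 1) ^ 2 := by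
  classical
  have hT : ∀ t ∈ sumTriples A f, (1 ≤ t.1 ∧ t.1 ≤ g) ∧ (1 ≤ t.2.1 ∧ t.2.1 ≤ g) ∧
      (1 ≤ t.2.2 ∧ t.2.2 ≤ g) := by
    simpa [subset_iff] using sumTriples_subset hfg
  have hbelow : #{t ∈ sumTriples A f | HitsBelow A f t} ≤ #(Icc (-g : ℤ) g ×ˢ Icc 1 g) := by
    refine card_le_card_of_injOn (fun t => ((t.1 : ℤ) - t.2.1, t.2.2)) ?_ ?_
    · intro t ht
      have := hT t (mem_filter.1 ht).1
      simp only [coe_product, Set.mem_prod, coe_Icc, Set.mem_Icc]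
      omega
    · intro t ht t' ht' heq
      simp only [coe_filter, Set.mem_ofPred_eq, Prod.mk.injEq] at ht ht' heq
      have := not_lt_of_hitsBelow hf ht.1 ht'.2 heq.2
      have := not_lt_of_hitsBelow hf ht'.1 ht.2 heq.2.symm
      ext <;> omega
  have hnotBelow : #{t ∈ sumTriples A f | ¬HitsBelow A f t} ≤ #(Icc 1 g ×ˢ Icc 1 g) := by
    refine card_le_card_of_injOn (fun t => (t.1, t.2.1)) ?_ ?_
    · intro t ht
      have := hT t (mem_filter.1 ht).1
      simp only [coe_product, Set.mem_prod, coe_Icc, Set.mem_Icc]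
      omega
    · intro t ht t' ht' heq
      simp only [coe_filter, Set.mem_ofPred_eq, Prod.mk.injEq] at ht ht' heq
      have := le_of_not_hitsBelow ht.1 ht'.2 heq.1 heq.2
      have := le_of_not_hitsBelow ht'.1 ht.2 heq.1.symm heq.2.symm
      ext <;> omega
  have hdiag : (g + 1 - -g : ℤ).toNat = 2 * g + 1 := by omega
  simp only [card_product, Int.card_Icc, Nat.card_Icc, hdiag, Nat.add_sub_cancel] at hbelow hnotBelow
  rw [← card_filter_add_card_filter_not (HitsBelow A f)]
  nlinarith

end SumTriples

theorem card_le_mul_of_div_mem_Ico {α : Type*} {s : Finset α} {r : α → ℕ} (hr : Set.InjOn r s)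
    {M q k : ℕ} (hM : 0 < M) (h : ∀ x ∈ s, q ≤ r x / M ∧ r x / M < q + k) : #s ≤ k * M := by
  calc #s ≤ #(Ico (q * M) ((q + k) * M)) := by
        refine card_le_card_of_injOn r (fun x hx => ?_) hr
        have := h x hx
        rw [Nat.le_div_iff_mul_le hM, Nat.div_lt_iff_lt_mul hM] at this
        simpa using this
    _ = k * M := by rw [Nat.card_Ico]; ring_nf; omega

section Rank

variable {α : Type*} [LinearOrder α] (A : Finset α)

def rankIn (x : α) : ℕ := #{y ∈ A | y < x}

theorem rankIn_mono : Monotone (rankIn A) := fun _ _ hxy =>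
  card_le_card (monotone_filter_right A fun _ _ hy => hy.trans_le hxy)

theorem rankIn_strictMonoOn : StrictMonoOn (rankIn A) A := fun x hx _ _ hxy =>
  card_lt_card <| (ssubset_iff_of_subset (monotone_filter_right A fun _ _ hy => hy.trans hxy)).2
    ⟨x, by simp [mem_coe.1 hx, hxy]⟩

theorem rankIn_lt_card {x : α} (hx : x ∈ A) : rankIn A x < #A :=
  card_lt_card <| filter_ssubset.2 ⟨x, hx, lt_irrefl x⟩

end Rank

section ValueBlock

def valueBlock (Λ : ℕ) (x : ℤ) : ℕ := (x / (Λ + 1 : ℤ)).toNat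

variable {Λ : ℕ}

theorem valueBlock_mono : Monotone (valueBlock Λ) := fun _ _ h =>
  Int.toNat_le_toNat (Int.ediv_le_ediv (by positivity) h)

theorem valueBlock_lt {g : ℕ} {x : ℤ} (hxg : x ≤ g * Λ) (hg : 0 < g) :
    valueBlock Λ x < g := by
  have : x / (Λ + 1 : ℤ) < g := Int.ediv_lt_of_lt_mul (by positivity) (by nlinarith)
  unfold valueBlock; omega

theorem sub_le_of_valueBlock_le {x y : ℤ} (hx : 0 ≤ x) (hxy : x ≤ y)
    (h : valueBlock Λ y ≤ valueBlock Λ x + 1) : y - x ≤ 2 * Λ + 1 := by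
  have hd : (0 : ℤ) < Λ + 1 := by positivity
  have hq : y / (Λ + 1 : ℤ) ≤ x / (Λ + 1) + 1 := by
    have := Int.ediv_nonneg hx hd.le
    have := Int.ediv_nonneg (hx.trans hxy) hd.le
    unfold valueBlock at h; omega
  have hy := Int.lt_ediv_add_one_mul_self y hd
  have hx' := Int.ediv_mul_le x hd.ne'
  nlinarith

end ValueBlock

section Partition

variable (A : Finset ℤ) (Λ M : ℕ)

def partIndex (x : ℤ) : ℕ := (valueBlock Λ x + rankIn A x / M) / 2 + 1

theorem partIndex_mono : Monotone (partIndex A Λ M) := fun _ _ h =>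
  Nat.add_le_add_right (Nat.div_le_div_right (add_le_add (valueBlock_mono h)
    (Nat.div_le_div_right (rankIn_mono A h)))) 1

variable {A Λ M}

theorem partIndex_mem_Icc {g : ℕ} (hA : ∀ a ∈ A, a ≤ g * Λ) (hAM : #A ≤ g * M)
    {a : ℤ} (ha : a ∈ A) : partIndex A Λ M a ∈ Icc 1 g := by
  have hrank : rankIn A a < g * M := (rankIn_lt_card A ha).trans_le hAM
  have hg : 0 < g := Nat.pos_of_mul_pos_right (hrank.trans_le' (Nat.zero_le _))
  have hv := valueBlock_lt (hA a ha) hg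
  have hr := Nat.div_lt_of_lt_mul (mul_comm g M ▸ hrank)
  exact mem_Icc.2 ⟨Nat.le_add_left _ _, by unfold partIndex; omega⟩

theorem blocks_le_of_partIndex_eq {x y : ℤ} (hxy : x ≤ y)
    (h : partIndex A Λ M x = partIndex A Λ M y) :
    valueBlock Λ y ≤ valueBlock Λ x + 1 ∧ rankIn A y / M ≤ rankIn A x / M + 1 := by
  have hv := valueBlock_mono (Λ := Λ) hxy
  have hr := Nat.div_le_div_right (c := M) (rankIn_mono A hxy)
  unfold partIndex at h; omega

theorem card_filter_partIndex_eq_le {g : ℕ} (hAM : #A ≤ g * M) (p : ℕ) :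
    #{a ∈ A | partIndex A Λ M a = p} ≤ 2 * M := by
  rcases eq_empty_or_nonempty {a ∈ A | partIndex A Λ M a = p} with hP | hP
  · simp [hP]
  set a₀ := min' _ hP
  have ha₀ := mem_filter.1 (min'_mem _ hP)
  have hM : 0 < M :=
    Nat.pos_of_mul_pos_left (((rankIn_lt_card A ha₀.1).trans_le hAM).trans_le' (Nat.zero_le _))
  refine card_le_mul_of_div_mem_Ico ((rankIn_strictMonoOn A).injOn.mono (filter_subset _ _)) hM
    (q := rankIn A a₀ / M) fun a ha => ?_
  have hle : a₀ ≤ a := min'_le _ a ha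
  have := blocks_le_of_partIndex_eq hle (ha₀.2.trans (mem_filter.1 ha).2.symm)
  have := Nat.div_le_div_right (c := M) (rankIn_mono A hle)
  omega

theorem exists_bounds_filter_partIndex_eq (hA : ∀ a ∈ A, 0 ≤ a) (p : ℕ) :
    ∃ lo : ℤ, ∀ a ∈ {a ∈ A | partIndex A Λ M a = p}, lo ≤ a ∧ a ≤ lo + (2 * Λ + 1) := by
  rcases eq_empty_or_nonempty {a ∈ A | partIndex A Λ M a = p} with hP | hP
  · simp [hP]
  have ha₀ := mem_filter.1 (min'_mem _ hP)
  refine ⟨min' _ hP, fun a ha => ⟨min'_le _ a ha, ?_⟩⟩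
  have hle := min'_le _ a ha
  have := sub_le_of_valueBlock_le (hA _ ha₀.1) hle
    (blocks_le_of_partIndex_eq hle (ha₀.2.trans (mem_filter.1 ha).2.symm)).1
  omega

end Partition

theorem exists_natCast_eq_ceil_div (m : ℕ) {g : ℕ} (hg : 1 ≤ g) :
    ∃ k : ℕ, (k : ℤ) = ⌈(m : ℝ) / (g : ℝ)⌉ ∧ m ≤ g * k := by
  have hg' : (0 : ℝ) < g := by exact_mod_cast hg
  refine ⟨⌈(m : ℝ) / g⌉₊, Int.natCast_ceil_eq_ceil (by positivity), ?_⟩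
  have := Nat.le_ceil ((m : ℝ) / g)
  rw [div_le_iff₀ hg'] at this
  exact_mod_cast (by linarith : (m : ℝ) ≤ g * ⌈(m : ℝ) / g⌉₊)

/-- Deterministic self-reduction for 3SUM (combinatorial content): for `U, g ≥ 1` and a
finite set `A ⊆ [0, U]` of integers with `|A| = n`, there is a partition of `A` into parts
`A₁, …, A_g` (possibly empty) and a set of triples `R ⊆ {1, …, g}³` of size at most
`(2g+1)²` such that each part has cardinality at most `4⌈n/g⌉` and fits in an interval of
length at most `4⌈U/g⌉`, and every solution `a + b = c` in `A` is captured by some triple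
of `R`. -/
theorem stmt_8 (U g : ℕ) (hU : 1 ≤ U) (hg : 1 ≤ g)
    (A : Finset ℤ) (hA : ∀ a ∈ A, 0 ≤ a ∧ a ≤ (U : ℤ)) (n : ℕ) (hn : A.card = n) :
    ∃ (parts : ℕ → Finset ℤ) (R : Finset (ℕ × ℕ × ℕ)),
      (∀ i ∈ Finset.Icc 1 g, ∀ j ∈ Finset.Icc 1 g, i ≠ j → Disjoint (parts i) (parts j)) ∧
      (Finset.Icc 1 g).biUnion parts = A ∧
      R ⊆ Finset.Icc 1 g ×ˢ Finset.Icc 1 g ×ˢ Finset.Icc 1 g ∧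
      R.card ≤ (2 * g + 1) ^ 2 ∧
      (∀ i ∈ Finset.Icc 1 g,
        ((parts i).card : ℤ) ≤ 4 * ⌈(n : ℝ) / (g : ℝ)⌉ ∧
          ∃ lo hi : ℤ, hi - lo ≤ 4 * ⌈(U : ℝ) / (g : ℝ)⌉ ∧ ∀ a ∈ parts i, lo ≤ a ∧ a ≤ hi) ∧
      (∀ a ∈ A, ∀ b ∈ A, ∀ c ∈ A, a + b = c →
        ∃ t ∈ R, a ∈ parts t.1 ∧ b ∈ parts t.2.1 ∧ c ∈ parts t.2.2) := by
  obtain ⟨Λ, hΛ, hUΛ⟩ := exists_natCast_eq_ceil_div U hg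
  obtain ⟨M, hM, hnM⟩ := exists_natCast_eq_ceil_div n hg
  rw [← hΛ, ← hM]
  have hΛ1 : 1 ≤ Λ := Nat.pos_of_mul_pos_left (lt_of_lt_of_le hU hUΛ)
  have hAΛ : ∀ a ∈ A, a ≤ g * Λ := fun a ha => (hA a ha).2.trans (by exact_mod_cast hUΛ)
  have hAM : #A ≤ g * M := hn ▸ hnM
  have hmaps : ∀ a ∈ A, partIndex A Λ M a ∈ Icc 1 g := fun a ha => partIndex_mem_Icc hAΛ hAM ha
  refine ⟨fun p => {a ∈ A | partIndex A Λ M a = p}, sumTriples A (partIndex A Λ M),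
    fun i _ j _ hij => disjoint_filter.2 fun _ _ hi hj => hij (hi.symm.trans hj),
    biUnion_filter_eq_of_maps_to hmaps, sumTriples_subset hmaps,
    card_sumTriples_le ((partIndex_mono A Λ M).monotoneOn _) hmaps, fun p _ => ⟨?_, ?_⟩, ?_⟩
  · have := card_filter_partIndex_eq_le (Λ := Λ) hAM p
    beta_reduce
    omega
  · obtain ⟨lo, hlo⟩ := exists_bounds_filter_partIndex_eq (fun a ha => (hA a ha).1) p
    exact ⟨lo, lo + (2 * Λ + 1), by omega, hlo⟩
  · rintro a ha b hb c hc rfl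
    exact ⟨_, mem_sumTriples.2 ⟨a, ha, b, hb, hc, rfl⟩, by simp [ha, hb, hc]⟩
end

section
/- Let N, S, U ≥ 1 be natural numbers and let A₁, …, A_N be finite sets of integers, each of cardinality at most S. Then there exist shifts s₁, …, s_N ∈ {0, …, U−1} such that U · Σ_{1 ≤ i < j ≤ N} ( |(A_i + s_i) ∩ (A_j + s_j)| + |(A_i + 2s_i) ∩ (A_j + 2s_j)| ) ≤ N² · S², where A + s denotes the set {a + s : a ∈ A}. -/
/-!
Average over all `U ^ N` shift tuples `σ`. For a pair `i ≠ j` and a fixed `(a, b) ∈ A_i × A_j`,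
the collision `a + c σ_i = b + c σ_j` (`c = 1, 2`) determines `σ_i` from `σ_j`, so it holds for
at most `U ^ (N - 1)` tuples. Hence each pair contributes at most `2 S² U ^ (N - 1)` to the sum
of the collision counts over all tuples, there are at most `N² / 2` pairs, and some tuple does
no worse than the average `N² S² / U`.
-/

open Finset

def collisionCount (X Y : Finset ℤ) (u v : ℤ) : ℕ :=
  #(X.image (· + u) ∩ Y.image (· + v))

theorem collisionCount_le_card_filter (X Y : Finset ℤ) (u v : ℤ) :
    collisionCount X Y u v ≤ #{ab ∈ X ×ˢ Y | ab.1 + u = ab.2 + v} := by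
  refine (card_le_card fun z hz => ?_).trans (card_image_le (f := fun ab : ℤ × ℤ => ab.1 + u))
  obtain ⟨⟨a, ha, rfl⟩, ⟨b, hb, hab⟩⟩ := by simpa only [mem_inter, mem_image] using hz
  exact mem_image.2 ⟨(a, b), by simp [ha, hb, hab], rfl⟩

section ShiftCounting

variable {ι α : Type*} [Fintype ι] [DecidableEq ι] [Fintype α]

theorem card_mul_card_le_card_pi_of_determined_off (i : ι) (P : Finset (ι → α))
    (hP : ∀ σ ∈ P, ∀ τ ∈ P, (∀ k ≠ i, σ k = τ k) → σ = τ) :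
    Fintype.card α * #P ≤ Fintype.card (ι → α) := by
  rw [Fintype.card_congr (Equiv.piSplitAt i fun _ => α), Fintype.card_prod]
  gcongr
  calc #P ≤ #(univ : Finset ({k // k ≠ i} → α)) :=
        card_le_card_of_injOn (fun σ k => σ k) (fun _ _ => mem_coe.2 (mem_univ _))
          fun σ hσ τ hτ h => hP σ hσ τ hτ fun k hk => congrFun h ⟨k, hk⟩
    _ = _ := card_univ

variable {U : ℕ}

theorem card_mul_card_filter_add_shift_eq_le {i j : ι} (hij : i ≠ j) {c : ℤ} (hc : c ≠ 0)
    (a b : ℤ) :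
    U * #{σ : ι → Fin U | a + c * (σ i : ℕ) = b + c * (σ j : ℕ)} ≤ U ^ Fintype.card ι := by
  simpa using card_mul_card_le_card_pi_of_determined_off i
    {σ : ι → Fin U | a + c * (σ i : ℕ) = b + c * (σ j : ℕ)} fun σ hσ τ hτ h => by
      rw [mem_filter] at hσ hτ
      have hj : σ j = τ j := h j hij.symm
      rw [hj] at hσ
      have hi : c * (σ i : ℕ) = c * (τ i : ℕ) := by linarith [hσ.2, hτ.2]
      funext k
      by_cases hk : k = i
      · subst hk; exact Fin.ext (by exact_mod_cast mul_left_cancel₀ hc hi)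
      · exact h k hk

theorem mul_sum_collisionCount_le {i j : ι} (hij : i ≠ j) (X Y : Finset ℤ) {c : ℤ}
    (hc : c ≠ 0) :
    U * ∑ σ : ι → Fin U, collisionCount X Y (c * (σ i : ℕ)) (c * (σ j : ℕ)) ≤
      #X * #Y * U ^ Fintype.card ι := by
  calc U * ∑ σ : ι → Fin U, collisionCount X Y (c * (σ i : ℕ)) (c * (σ j : ℕ))
      ≤ U * ∑ σ : ι → Fin U, ∑ ab ∈ X ×ˢ Y,
          if ab.1 + c * (σ i : ℕ) = ab.2 + c * (σ j : ℕ) then 1 else 0 := by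
        gcongr with σ
        rw [← card_filter]
        exact collisionCount_le_card_filter X Y _ _
    _ = ∑ ab ∈ X ×ˢ Y, U * #{σ : ι → Fin U | ab.1 + c * (σ i : ℕ) = ab.2 + c * (σ j : ℕ)} := by
        simp only [card_filter, mul_sum]
        exact sum_comm
    _ ≤ ∑ _ab ∈ X ×ˢ Y, U ^ Fintype.card ι :=
        sum_le_sum fun ab _ => card_mul_card_filter_add_shift_eq_le hij hc ab.1 ab.2
    _ = #X * #Y * U ^ Fintype.card ι := by rw [sum_const, card_product, smul_eq_mul]

end ShiftCounting

theorem two_mul_card_filter_lt_le (α : Type*) [Fintype α] [LinearOrder α] :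
    2 * #{p : α × α | p.1 < p.2} ≤ Fintype.card α ^ 2 := by
  rw [Fintype.card_product_filter_lt, Nat.choose_two_right, sq]
  exact (Nat.mul_div_le _ 2).trans (Nat.mul_le_mul_left _ (Nat.sub_le _ 1))

section TotalCollisions

variable {ι : Type*} [Fintype ι] [LinearOrder ι]

def totalCollisions (A : ι → Finset ℤ) (s : ι → ℤ) : ℕ :=
  ∑ p ∈ ({p : ι × ι | p.1 < p.2} : Finset _),
    (collisionCount (A p.1) (A p.2) (s p.1) (s p.2) +
      collisionCount (A p.1) (A p.2) (2 * s p.1) (2 * s p.2))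

theorem mul_sum_totalCollisions_le {U S : ℕ} {A : ι → Finset ℤ} (hA : ∀ i, #(A i) ≤ S) :
    U * ∑ σ : ι → Fin U, totalCollisions A (fun i => (σ i : ℕ)) ≤
      Fintype.card ι ^ 2 * S ^ 2 * U ^ Fintype.card ι := by
  have hpair : ∀ p ∈ ({p : ι × ι | p.1 < p.2} : Finset _),
      U * ∑ σ : ι → Fin U,
        (collisionCount (A p.1) (A p.2) (σ p.1 : ℕ) (σ p.2 : ℕ) +
          collisionCount (A p.1) (A p.2) (2 * (σ p.1 : ℕ)) (2 * (σ p.2 : ℕ))) ≤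
        2 * (S ^ 2 * U ^ Fintype.card ι) := by
    intro p hp
    have hij : p.1 ≠ p.2 := (mem_filter.1 hp).2.ne
    have h1 := mul_sum_collisionCount_le (U := U) hij (A p.1) (A p.2) one_ne_zero
    have h2 := mul_sum_collisionCount_le (U := U) hij (A p.1) (A p.2) two_ne_zero
    simp only [one_mul] at h1
    have hcard : #(A p.1) * #(A p.2) * U ^ Fintype.card ι ≤ S ^ 2 * U ^ Fintype.card ι := by
      rw [sq]; gcongr <;> apply hA
    rw [sum_add_distrib, mul_add, two_mul]
    exact add_le_add (h1.trans hcard) (h2.trans hcard)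
  calc _ = ∑ p ∈ ({p : ι × ι | p.1 < p.2} : Finset _), U * ∑ σ : ι → Fin U,
        (collisionCount (A p.1) (A p.2) (σ p.1 : ℕ) (σ p.2 : ℕ) +
          collisionCount (A p.1) (A p.2) (2 * (σ p.1 : ℕ)) (2 * (σ p.2 : ℕ))) := by
        simp only [totalCollisions, mul_sum]
        exact sum_comm
    _ ≤ _ := sum_le_sum hpair
    _ = 2 * #{p : ι × ι | p.1 < p.2} * S ^ 2 * U ^ Fintype.card ι := by
        rw [sum_const, smul_eq_mul]; ring
    _ ≤ _ := by gcongr; exact two_mul_card_filter_lt_le ι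

end TotalCollisions

theorem stmt_12_general (N S U : ℕ) (hU : 1 ≤ U)
    (A : Fin N → Finset ℤ) (hA : ∀ i, (A i).card ≤ S) :
    ∃ s : Fin N → ℕ, (∀ i, s i < U) ∧
      U * ∑ p ∈ Finset.univ.filter (fun p : Fin N × Fin N => p.1 < p.2),
        (((A p.1).image (fun a => a + (s p.1 : ℤ)) ∩
            (A p.2).image (fun a => a + (s p.2 : ℤ))).card +
          ((A p.1).image (fun a => a + 2 * (s p.1 : ℤ)) ∩
            (A p.2).image (fun a => a + 2 * (s p.2 : ℤ))).card) ≤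
        N ^ 2 * S ^ 2 := by
  have : NeZero U := ⟨by omega⟩
  have htotal : ∑ σ : Fin N → Fin U, U * totalCollisions A (fun i => (σ i : ℕ)) ≤
      ∑ _σ : Fin N → Fin U, N ^ 2 * S ^ 2 := by
    rw [← mul_sum, sum_const, card_univ, Fintype.card_fun, Fintype.card_fin, Fintype.card_fin,
      smul_eq_mul, mul_comm (U ^ N)]
    simpa using mul_sum_totalCollisions_le (U := U) hA
  obtain ⟨σ, -, hσ⟩ := exists_le_of_sum_le univ_nonempty htotal
  exact ⟨fun i => σ i, fun i => (σ i).isLt, hσ⟩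

/-- Shift selection: for `N, S, U ≥ 1` and finite sets of integers `A₁, …, A_N` each of
cardinality at most `S`, there exist shifts `s₁, …, s_N ∈ {0, …, U−1}` with
`U · ∑_{i < j} (|(A_i + s_i) ∩ (A_j + s_j)| + |(A_i + 2s_i) ∩ (A_j + 2s_j)|) ≤ N² · S²`. -/
theorem stmt_12 (N S U : ℕ) (hN : 1 ≤ N) (hS : 1 ≤ S) (hU : 1 ≤ U)
    (A : Fin N → Finset ℤ) (hA : ∀ i, (A i).card ≤ S) :
    ∃ s : Fin N → ℕ, (∀ i, s i < U) ∧
      U * ∑ p ∈ Finset.univ.filter (fun p : Fin N × Fin N => p.1 < p.2),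
        (((A p.1).image (fun a => a + (s p.1 : ℤ)) ∩
            (A p.2).image (fun a => a + (s p.2 : ℤ))).card +
          ((A p.1).image (fun a => a + 2 * (s p.1 : ℤ)) ∩
            (A p.2).image (fun a => a + 2 * (s p.2 : ℤ))).card) ≤
        N ^ 2 * S ^ 2 :=
  stmt_12_general N S U hU A hA
end

section
/- Let N, S, U ≥ 1 be natural numbers, let α ≥ 1 be an integer, and let A₁, …, A_N be finite sets of integers, each of cardinality at most S. Then there exist shifts s₁, …, s_N ∈ {0, …, U−1} and subsets B_i ⊆ A_i such that, writing A_i' = A_i \ B_i: (1) for every integer a, the number of indices i with a ∈ A_i' + s_i is at most α, and the number of indices i with a ∈ A_i' + 2s_i is at most α; and (2) α · U · Σ_{i=1}^N |B_i| ≤ 2 · N² · S². -/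
/-!
Place the sets one after another. When `A_j` is placed, call a point heavy if it is already
covered `α` times by the translates placed so far; with `n` sets placed there are at most `n S / α`
heavy points for each translation rule `x ↦ x + c u`, `c ∈ {1, 2}`. For a fixed `a ∈ A_j` and
`c ≠ 0` the points `a + c u`, `u < U`, are distinct, so summed over all `U` shifts at most `2 n S² / α`
elements of `A_j` land on a heavy point. Some shift `u` therefore sends at most `2 n S² / (α U)`
elements onto heavy points; these form `B_j`, and the rest of `A_j` may be placed with shift `u`
without exceeding load `α`. Summing `2 n S² / (α U)` over `n < N` gives the bound.
-/

open Finset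

namespace LoadBalancing

variable {ι β γ X : Type*} [DecidableEq X]

def load (s : Finset ι) (F : ι → Finset X) (x : X) : ℕ := #{i ∈ s | x ∈ F i}

def shiftedParts (A B : ι → Finset ℤ) (t : ι → ℕ) (c : ℤ) (i : ι) : Finset ℤ :=
  (A i \ B i).image (· + c * t i)

lemma card_shiftedParts_le (A B : ι → Finset ℤ) (t : ι → ℕ) (c : ℤ) (i : ι) :
    #(shiftedParts A B t c i) ≤ #(A i) :=
  card_image_le.trans (card_le_card sdiff_subset)

lemma load_congr {s : Finset ι} {F G : ι → Finset X} (h : ∀ i ∈ s, F i = G i) (x : X) :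
    load s F x = load s G x := by
  unfold load
  rw [filter_congr fun i hi => by rw [h i hi]]

lemma load_insert [DecidableEq ι] {s : Finset ι} {j : ι} (hj : j ∉ s) (F : ι → Finset X)
    (x : X) : load (insert j s) F x = load s F x + if x ∈ F j then 1 else 0 := by
  unfold load
  rw [filter_insert]
  split_ifs
  · rw [card_insert_of_notMem (by simp [hj])]
  · rfl

lemma load_insert_le [DecidableEq ι] {s : Finset ι} {j : ι} (hj : j ∉ s) {F G : ι → Finset X}
    {α : ℕ} (hGF : ∀ i ∈ s, G i = F i) (hF : ∀ x, load s F x ≤ α)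
    (hG : ∀ x ∈ G j, load s F x < α) (x : X) : load (insert j s) G x ≤ α := by
  rw [load_insert hj, load_congr hGF]
  split_ifs with hx
  · exact hG x hx
  · simpa using hF x

lemma sum_load_le_of_injOn (s : Finset ι) (F : ι → Finset X) {R : Finset β} {φ : β → X}
    (hφ : Set.InjOn φ R) : ∑ t ∈ R, load s F (φ t) ≤ ∑ i ∈ s, #(F i) := by
  unfold load
  simp_rw [card_filter]
  rw [sum_comm]
  refine sum_le_sum fun i _ => ?_
  rw [← card_filter]
  exact card_le_card_of_injOn φ (fun t ht => (mem_filter.1 ht).2) (hφ.mono (filter_subset _ _))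

lemma mul_card_filter_le_sum (R : Finset β) (g : β → ℕ) (α : ℕ) :
    α * #{t ∈ R | α ≤ g t} ≤ ∑ t ∈ R, g t := by
  rw [mul_comm, ← smul_eq_mul]
  exact (card_nsmul_le_sum _ g α fun t ht => (mem_filter.1 ht).2).trans
    (sum_le_sum_of_subset (filter_subset _ _))

lemma card_filter_exists_le (A : Finset β) (C : Finset γ) (P : γ → β → Prop)
    [∀ c, DecidablePred (P c)] : #{a ∈ A | ∃ c ∈ C, P c a} ≤ ∑ c ∈ C, #{a ∈ A | P c a} := by
  classical
  refine (card_le_card fun a ha => ?_).trans card_biUnion_le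
  obtain ⟨haA, c, hc, hca⟩ := mem_filter.1 ha
  exact mem_biUnion.2 ⟨c, hc, mem_filter.2 ⟨haA, hca⟩⟩

lemma exists_shift_card_heavy_le (s : Finset ι) (F : ℤ → ι → Finset ℤ) {C : Finset ℤ}
    (hC : 0 ∉ C) (A : Finset ℤ) {U : ℕ} (hU : 0 < U) (α : ℕ) :
    ∃ u < U, α * U * #{a ∈ A | ∃ c ∈ C, α ≤ load s (F c) (a + c * u)}
      ≤ #A * ∑ c ∈ C, ∑ i ∈ s, #(F c i) := by
  have hcount : ∀ c ∈ C, ∀ a : ℤ,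
      α * #{u ∈ range U | α ≤ load s (F c) (a + c * (u : ℕ))} ≤ ∑ i ∈ s, #(F c i) := by
    intro c hc a
    refine (mul_card_filter_le_sum _ _ α).trans (sum_load_le_of_injOn s (F c) fun u _ v _ h => ?_)
    have hc0 : c ≠ 0 := fun h0 => hC (h0 ▸ hc)
    exact_mod_cast mul_left_cancel₀ hc0 (add_left_cancel h)
  have havg : α * ∑ u ∈ range U, #{a ∈ A | ∃ c ∈ C, α ≤ load s (F c) (a + c * u)}
      ≤ #A * ∑ c ∈ C, ∑ i ∈ s, #(F c i) := calc
    _ ≤ α * ∑ u ∈ range U, ∑ c ∈ C, #{a ∈ A | α ≤ load s (F c) (a + c * u)} :=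
        Nat.mul_le_mul_left _ (sum_le_sum fun u _ => card_filter_exists_le _ _ _)
    _ = ∑ c ∈ C, ∑ a ∈ A, α * #{u ∈ range U | α ≤ load s (F c) (a + c * (u : ℕ))} := by
        simp_rw [card_filter, mul_sum]
        rw [sum_comm]
        exact sum_congr rfl fun c _ => sum_comm
    _ ≤ ∑ c ∈ C, ∑ _a ∈ A, ∑ i ∈ s, #(F c i) :=
        sum_le_sum fun c hc => sum_le_sum fun a _ => hcount c hc a
    _ = #A * ∑ c ∈ C, ∑ i ∈ s, #(F c i) := by simp [sum_const, mul_sum]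
  obtain ⟨u, hu, hle⟩ := exists_le_of_sum_le (s := range U) (nonempty_range_iff.2 hU.ne')
    (f := fun u : ℕ => α * U * #{a ∈ A | ∃ c ∈ C, α ≤ load s (F c) (a + c * u)})
    (g := fun _ => #A * ∑ c ∈ C, ∑ i ∈ s, #(F c i))
    (by
      rw [sum_const, card_range, smul_eq_mul, ← mul_sum, mul_comm α U, mul_assoc]
      exact Nat.mul_le_mul_left U havg)
  exact ⟨u, mem_range.1 hu, hle⟩

theorem exists_shifts_load_le [DecidableEq ι] (s : Finset ι) (A : ι → Finset ℤ) {S U : ℕ}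
    (hA : ∀ i ∈ s, #(A i) ≤ S) (hU : 0 < U) {C : Finset ℤ} (hC : 0 ∉ C) (α : ℕ) :
    ∃ (t : ι → ℕ) (B : ι → Finset ℤ), (∀ i, t i < U) ∧ (∀ i, B i ⊆ A i) ∧
      (∀ c ∈ C, ∀ x, load s (shiftedParts A B t c) x ≤ α) ∧
      α * U * ∑ i ∈ s, #(B i) ≤ #C * #s ^ 2 * S ^ 2 := by
  induction s using Finset.induction_on with
  | empty => exact ⟨0, A, fun _ => hU, fun _ => subset_rfl, by simp [load], by simp⟩
  | insert j s hj ih =>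
    obtain ⟨t, B, htU, hBA, hload, hsum⟩ := ih fun i hi => hA i (mem_insert_of_mem hi)
    obtain ⟨u, huU, hBj⟩ := exists_shift_card_heavy_le s (shiftedParts A B t) hC (A j) hU α
    set Bj := {a ∈ A j | ∃ c ∈ C, α ≤ load s (shiftedParts A B t c) (a + c * u)}
    have hne : ∀ i ∈ s, i ≠ j := fun i hi => ne_of_mem_of_not_mem hi hj
    refine ⟨Function.update t j u, Function.update B j Bj, fun i => ?_, fun i => ?_,
      fun c hc => load_insert_le hj (fun i hi => ?_) (hload c hc) ?_, ?_⟩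
    · rcases eq_or_ne i j with rfl | h
      · simpa using huU
      · simpa [h] using htU i
    · rcases eq_or_ne i j with rfl | h
      · rw [Function.update_self]; exact filter_subset _ _
      · simpa [h] using hBA i
    · simp [shiftedParts, hne i hi]
    · intro x hx
      rw [shiftedParts, Function.update_self, Function.update_self] at hx
      obtain ⟨a, ha, rfl⟩ := mem_image.1 hx
      obtain ⟨haA, haB⟩ := mem_sdiff.1 ha
      by_contra! hheavy
      exact haB (mem_filter.2 ⟨haA, c, hc, hheavy⟩)
    · have hparts : ∑ c ∈ C, ∑ i ∈ s, #(shiftedParts A B t c i) ≤ #C * (#s * S) :=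
        sum_le_card_nsmul _ _ _ fun c _ => sum_le_card_nsmul _ _ _ fun i hi =>
          (card_shiftedParts_le A B t c i).trans (hA i (mem_insert_of_mem hi))
      rw [sum_insert hj, Function.update_self, sum_congr rfl fun i hi => by
        rw [Function.update_of_ne (hne i hi)], card_insert_of_notMem hj]
      calc α * U * (#Bj + ∑ i ∈ s, #(B i))
          ≤ #(A j) * (#C * (#s * S)) + #C * #s ^ 2 * S ^ 2 := by
            rw [mul_add]; exact add_le_add (hBj.trans (Nat.mul_le_mul_left _ hparts)) hsum
        _ ≤ S * (#C * (#s * S)) + #C * #s ^ 2 * S ^ 2 :=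
            Nat.add_le_add_right (Nat.mul_le_mul_right _ (hA j (mem_insert_self j s))) _
        _ ≤ #C * (#s + 1) ^ 2 * S ^ 2 := by ring_nf; omega

end LoadBalancing

open LoadBalancing in
theorem stmt_13_general (N S U : ℕ) (hU : 1 ≤ U)
    (α : ℕ)
    (A : Fin N → Finset ℤ) (hA : ∀ i, (A i).card ≤ S) :
    ∃ (s : Fin N → ℕ) (B : Fin N → Finset ℤ),
      (∀ i, s i < U) ∧ (∀ i, B i ⊆ A i) ∧
      (∀ a : ℤ,
        (Finset.univ.filter
          (fun i : Fin N => a ∈ ((A i) \ (B i)).image (fun x => x + (s i : ℤ)))).card ≤ α ∧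
        (Finset.univ.filter
          (fun i : Fin N => a ∈ ((A i) \ (B i)).image (fun x => x + 2 * (s i : ℤ)))).card ≤ α) ∧
      α * U * ∑ i, (B i).card ≤ 2 * N ^ 2 * S ^ 2 := by
  obtain ⟨s, B, hsU, hBA, hload, hsum⟩ :=
    exists_shifts_load_le univ A (fun i _ => hA i) hU (C := {1, 2}) (by decide) α
  refine ⟨s, B, hsU, hBA, fun a => ⟨?_, ?_⟩, ?_⟩
  · simpa [load, shiftedParts] using hload 1 (by simp) a
  · simpa [load, shiftedParts] using hload 2 (by simp) a
  · simpa using hsum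

/-- Deterministic load balancing (existence form): for `N, S, U ≥ 1`, an integer `α ≥ 1`,
and finite sets of integers `A₁, …, A_N` each of cardinality at most `S`, there exist shifts
`s₁, …, s_N ∈ {0, …, U−1}` and leftover parts `B_i ⊆ A_i` such that, with `A_i' = A_i \ B_i`:
every integer is covered by at most `α` of the sets `A_i' + s_i` and by at most `α` of the
sets `A_i' + 2s_i`, and `α · U · ∑ i, |B_i| ≤ 2 · N² · S²`. -/
theorem stmt_13 (N S U : ℕ) (hN : 1 ≤ N) (hS : 1 ≤ S) (hU : 1 ≤ U)
    (α : ℕ) (hα : 1 ≤ α)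
    (A : Fin N → Finset ℤ) (hA : ∀ i, (A i).card ≤ S) :
    ∃ (s : Fin N → ℕ) (B : Fin N → Finset ℤ),
      (∀ i, s i < U) ∧ (∀ i, B i ⊆ A i) ∧
      (∀ a : ℤ,
        (Finset.univ.filter
          (fun i : Fin N => a ∈ ((A i) \ (B i)).image (fun x => x + (s i : ℤ)))).card ≤ α ∧
        (Finset.univ.filter
          (fun i : Fin N => a ∈ ((A i) \ (B i)).image (fun x => x + 2 * (s i : ℤ)))).card ≤ α) ∧
      α * U * ∑ i, (B i).card ≤ 2 * N ^ 2 * S ^ 2 :=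
  stmt_13_general N S U hU α A hA
end
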